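/- arXiv:1903.03994 — 10 statements merged into one kernel-verified Lean document; each statement's English description precedes it below -/
import Mathlib

section
/- Let (V, L, R) be a bimodule of an alternative algebra (A, μ), and let α, β: A → A and φ, ψ: V → V be linear maps with αβ = βα, φψ = ψφ, φL(x) = L(α(x))φ, φR(x) = R(α(x))φ, ψL(x) = L(β(x))ψ, ψR(x) = R(β(x))ψ, where α, β are algebra morphisms and L, R are twisted accordingly. Then (V, L̃, R̃, φ, ψ) with L̃(x) = L(α(x))ψ and R̃(x) = R(β(x))φ is a bimodule of the Yau twist BiHom-alternative algebra (A, μ_{α,β}, α, β), where μ_{α,β}(x,y) = μ(α(x), β(y)). -/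
variable {K : Type*} [Field K] {A : Type*} [AddCommGroup A] [Module K A]
  {V : Type*} [AddCommGroup V] [Module K V]

/-- The BiHom-associator of a bilinear multiplication with respect to two linear maps. -/
def bihomAssoc (μ : A →ₗ[K] A →ₗ[K] A) (α β : A →ₗ[K] A) (x y z : A) : A :=
  μ (α x) (μ y z) - μ (μ x y) (β z)

/-- A BiHom-alternative algebra structure on `A`. -/
structure IsBiHomAlternative (μ : A →ₗ[K] A →ₗ[K] A) (α β : A →ₗ[K] A) : Prop where
  hαβ : ∀ x, α (β x) = β (α x)
  hα : ∀ x y, α (μ x y) = μ (α x) (α y)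
  hβ : ∀ x y, β (μ x y) = μ (β x) (β y)
  hleft : ∀ x y z,
    bihomAssoc μ α β (β x) (α y) z + bihomAssoc μ α β (β y) (α x) z = 0
  hright : ∀ x y z,
    bihomAssoc μ α β x (β y) (α z) + bihomAssoc μ α β x (β z) (α y) = 0
/-- A bimodule (representation) of a BiHom-alternative algebra. -/
structure IsBiHomAltBimodule (μ : A →ₗ[K] A →ₗ[K] A) (α β : A →ₗ[K] A)
    (L R : A →ₗ[K] V →ₗ[K] V) (φ ψ : V →ₗ[K] V) : Prop where
  hφψ : ∀ v, φ (ψ v) = ψ (φ v)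
  hφL : ∀ x v, φ (L x v) = L (α x) (φ v)
  hφR : ∀ x v, φ (R x v) = R (α x) (φ v)
  hψL : ∀ x v, ψ (L x v) = L (β x) (ψ v)
  hψR : ∀ x v, ψ (R x v) = R (β x) (ψ v)
  rep1 : ∀ x v, L (μ (β x) (α x)) (ψ v) = L (α (β x)) (L (α x) v)
  rep2 : ∀ x v, R (μ (β x) (α x)) (φ v) = R (α (β x)) (R (β x) v)
  rep3 : ∀ x y v, R (β y) (L (β x) (φ v)) - L (α (β x)) (R y (φ v)) =
    R (μ (α x) y) (φ (ψ v)) - R (β y) (R (α x) (ψ v))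
  rep4 : ∀ x y v, L (α y) (R (α x) (ψ v)) - R (α (β x)) (L y (ψ v)) =
    L (μ y (β x)) (φ (ψ v)) - L (α y) (L (β x) (φ v))

/-- Twisting a bimodule of an alternative algebra into a bimodule of the
Yau twist BiHom-alternative algebra: `L̃(x) = L(α(x))∘ψ`, `R̃(x) = R(β(x))∘φ`. -/
theorem yauTwist_bimodule
    (μ : A →ₗ[K] A →ₗ[K] A) (L R : A →ₗ[K] V →ₗ[K] V)
    (α β : A →ₗ[K] A) (φ ψ : V →ₗ[K] V)
    (hA : IsBiHomAlternative μ LinearMap.id LinearMap.id)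
    (hbim : IsBiHomAltBimodule μ LinearMap.id LinearMap.id L R LinearMap.id LinearMap.id)
    (hαβ : ∀ x, α (β x) = β (α x))
    (hαμ : ∀ x y, α (μ x y) = μ (α x) (α y))
    (hβμ : ∀ x y, β (μ x y) = μ (β x) (β y))
    (hφψ : ∀ v, φ (ψ v) = ψ (φ v))
    (hφL : ∀ x v, φ (L x v) = L (α x) (φ v))
    (hφR : ∀ x v, φ (R x v) = R (α x) (φ v))
    (hψL : ∀ x v, ψ (L x v) = L (β x) (ψ v))
    (hψR : ∀ x v, ψ (R x v) = R (β x) (ψ v)) :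
    IsBiHomAltBimodule ((μ.comp α).compl₂ β) α β
      (((LinearMap.llcomp K V V V).flip ψ).comp (L.comp α))
      (((LinearMap.llcomp K V V V).flip φ).comp (R.comp β)) φ ψ := by
  obtain ⟨_, _, _, _, _, r1, r2, r3, r4⟩ := hbim
  simp only [LinearMap.id_coe, id_eq] at r1 r2 r3 r4
  constructor <;>
    intros <;>
    simp only [LinearMap.comp_apply, LinearMap.flip_apply, LinearMap.llcomp_apply,
      LinearMap.compl₂_apply, hαμ, hβμ, hφL, hφR, hψL, hψR, hαβ, hφψ]
  · exact r1 _ _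
  · exact r2 _ _
  · exact r3 _ _ _
  · exact r4 _ _ _
end

section
/- Let (A, ≺, ≻, α, β) be a BiHom-pre-alternative algebra. Then (A, ∘, α, β) with x ∘ y = x ≺ y + x ≻ y is a BiHom-alternative algebra. -/
variable {K : Type*} [Field K] {A : Type*} [AddCommGroup A] [Module K A]
  {V : Type*} [AddCommGroup V] [Module K V]

/-- The right BiHom-associator of a pair of bilinear operations `p = ≺`, `s = ≻`. -/
def preAsR (p s : A →ₗ[K] A →ₗ[K] A) (α β : A →ₗ[K] A) (x y z : A) : A :=
  p (p x y) (β z) - p (α x) (p y z + s y z)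

/-- The middle BiHom-associator. -/
def preAsM (p s : A →ₗ[K] A →ₗ[K] A) (α β : A →ₗ[K] A) (x y z : A) : A :=
  p (s x y) (β z) - s (α x) (p y z)

/-- The left BiHom-associator. -/
def preAsL (p s : A →ₗ[K] A →ₗ[K] A) (α β : A →ₗ[K] A) (x y z : A) : A :=
  s (p x y + s x y) (β z) - s (α x) (s y z)

/-- A BiHom-pre-alternative algebra structure on `A`, with `p = ≺` and `s = ≻`. -/
structure IsBiHomPreAlternative (p s : A →ₗ[K] A →ₗ[K] A) (α β : A →ₗ[K] A) : Prop where
  hαβ : ∀ x, α (β x) = β (α x)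
  hαp : ∀ x y, α (p x y) = p (α x) (α y)
  hαs : ∀ x y, α (s x y) = s (α x) (α y)
  hβp : ∀ x y, β (p x y) = p (β x) (β y)
  hβs : ∀ x y, β (s x y) = s (β x) (β y)
  hr : ∀ x y z, preAsR p s α β x (β y) (α z) + preAsR p s α β x (β z) (α y) = 0
  hl : ∀ x y z, preAsL p s α β (β x) (α y) z + preAsL p s α β (β y) (α x) z = 0
  hmr : ∀ x y z, preAsM p s α β (β x) (α y) z + preAsR p s α β (β y) (α x) z = 0
  hml : ∀ x y z, preAsM p s α β x (β y) (α z) + preAsL p s α β x (β z) (α y) = 0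

/-- The sum of the two operations of a BiHom-pre-alternative algebra is a
BiHom-alternative multiplication. -/
theorem biHomPreAlternative_toBiHomAlternative
    (p s : A →ₗ[K] A →ₗ[K] A) (α β : A →ₗ[K] A)
    (hpre : IsBiHomPreAlternative p s α β) :
    IsBiHomAlternative (p + s) α β := by
  have key : ∀ x y z, bihomAssoc (p + s) α β x y z =
      -(preAsR p s α β x y z + preAsM p s α β x y z + preAsL p s α β x y z) := by
    intro x y z
    simp only [bihomAssoc, preAsR, preAsM, preAsL, LinearMap.add_apply, map_add]
    abel
  refine ⟨hpre.hαβ, ?_, ?_, ?_, ?_⟩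
  · intro x y
    simp [hpre.hαp, hpre.hαs, map_add]
  · intro x y
    simp [hpre.hβp, hpre.hβs, map_add]
  · intro x y z
    have h1 := hpre.hl x y z
    have h2 := hpre.hmr x y z
    have h3 := hpre.hmr y x z
    have e : bihomAssoc (p + s) α β (β x) (α y) z + bihomAssoc (p + s) α β (β y) (α x) z =
        -((preAsL p s α β (β x) (α y) z + preAsL p s α β (β y) (α x) z) +
          ((preAsM p s α β (β x) (α y) z + preAsR p s α β (β y) (α x) z) +
           (preAsM p s α β (β y) (α x) z + preAsR p s α β (β x) (α y) z))) := by
      rw [key, key]; abel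
    rw [e, h1, h2, h3]; simp
  · intro x y z
    have h1 := hpre.hr x y z
    have h2 := hpre.hml x y z
    have h3 := hpre.hml x z y
    have e : bihomAssoc (p + s) α β x (β y) (α z) + bihomAssoc (p + s) α β x (β z) (α y) =
        -((preAsR p s α β x (β y) (α z) + preAsR p s α β x (β z) (α y)) +
          ((preAsM p s α β x (β y) (α z) + preAsL p s α β x (β z) (α y)) +
           (preAsM p s α β x (β z) (α y) + preAsL p s α β x (β y) (α z)))) := by
      rw [key, key]; abel
    rw [e, h1, h2, h3]; simp
end

section
/- Let (A, ≺, ≻, α, β) be a regular BiHom-pre-alternative algebra (α, β invertible). Then (A, ⋆, α, β) with x ⋆ y = x≺y + x≻y + α⁻¹β(y)≺αβ⁻¹(x) + α⁻¹β(y)≻αβ⁻¹(x) is a BiHom-Jordan algebra. -/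
variable {K : Type*} [Field K] {A : Type*} [AddCommGroup A] [Module K A]
  {V : Type*} [AddCommGroup V] [Module K V]

/-- A BiHom-Jordan algebra structure on `A` (with invertible structure maps):
a BiHom-commutative multiplication whose twisted linearized Jordan identity holds. -/
structure IsBiHomJordan (m : A →ₗ[K] A →ₗ[K] A) (α β : A ≃ₗ[K] A) : Prop where
  hαβ : ∀ x, α (β x) = β (α x)
  hα : ∀ x y, α (m x y) = m (α x) (α y)
  hβ : ∀ x y, β (m x y) = m (β x) (β y)
  hcomm : ∀ x y, m (β x) (α y) = m (β y) (α x)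
  hjordan : ∀ x y z u,
    bihomAssoc m α.toLinearMap β.toLinearMap
      (m (β x) (α z)) (α (β y)) (α (α (α (β.symm u)))) +
    bihomAssoc m α.toLinearMap β.toLinearMap
      (m (β z) (α u)) (α (β y)) (α (α (α (β.symm x)))) +
    bihomAssoc m α.toLinearMap β.toLinearMap
      (m (β u) (α x)) (α (β y)) (α (α (α (β.symm z)))) = 0


set_option maxHeartbeats 4000000 in
/-- Key combinatorial lemma: for a bilinear operation `n` satisfying the linearized left and
right alternative laws, the symmetrized product `a ∘ b = n a b + n b a` satisfies the fully
linearized Jordan identity. -/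
private theorem jordan_key_aux (n : A →ₗ[K] A →ₗ[K] A)
    (hAL : ∀ a b c : A, n a (n b c) - n (n a b) c + (n b (n a c) - n (n b a) c) = 0)
    (hAR : ∀ a b c : A, n a (n b c) - n (n a b) c + (n a (n c b) - n (n a c) b) = 0)
    (x y z u : A) :
    ((n (n x z + n z x) (n y u + n u y) + n (n y u + n u y) (n x z + n z x)) - (n (n (n x z + n z x) y + n y (n x z + n z x)) u + n u (n (n x z + n z x) y + n y (n x z + n z x)))) + ((n (n z u + n u z) (n y x + n x y) + n (n y x + n x y) (n z u + n u z)) - (n (n (n z u + n u z) y + n y (n z u + n u z)) x + n x (n (n z u + n u z) y + n y (n z u + n u z)))) + ((n (n u x + n x u) (n y z + n z y) + n (n y z + n z y) (n u x + n x u)) - (n (n (n u x + n x u) y + n y (n u x + n x u)) z + n z (n (n u x + n x u) y + n y (n u x + n x u)))) = 0 := by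
  have hL2 : ∀ a b c d : A,
      n d (n a (n b c)) - n d (n (n a b) c) + (n d (n b (n a c)) - n d (n (n b a) c)) = 0 := by
    intro a b c d
    rw [← map_sub, ← map_sub, ← map_add, hAL, map_zero]
  have hR2 : ∀ a b c d : A,
      n (n a (n b c)) d - n (n (n a b) c) d + (n (n b (n a c)) d - n (n (n b a) c) d) = 0 := by
    intro a b c d
    rw [← LinearMap.sub_apply, ← LinearMap.sub_apply, ← LinearMap.add_apply, ← map_sub,
      ← map_sub, ← map_add, hAL, map_zero, LinearMap.zero_apply]
  have hL3 : ∀ a b c d : A,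
      n d (n a (n b c)) - n d (n (n a b) c) + (n d (n a (n c b)) - n d (n (n a c) b)) = 0 := by
    intro a b c d
    rw [← map_sub, ← map_sub, ← map_add, hAR, map_zero]
  have hR3 : ∀ a b c d : A,
      n (n a (n b c)) d - n (n (n a b) c) d + (n (n a (n c b)) d - n (n (n a c) b) d) = 0 := by
    intro a b c d
    rw [← LinearMap.sub_apply, ← LinearMap.sub_apply, ← LinearMap.add_apply, ← map_sub,
      ← map_sub, ← map_add, hAR, map_zero, LinearMap.zero_apply]
  simp only [map_add, LinearMap.add_apply]
  linear_combination (norm := module) - (hAL z u (n x y)) + (hL2 x y z u) + (hAL (n x y) u z) + (hL2 x y u z) - (hR3 x y u z) - (hL3 x y u z) + (hAR (n x z) y u) + (hAR y (n x z) u) - (hAL y u (n x z)) + (hL2 x z y u) - (hR2 x z u y) + (hL2 x z u y) + (hAR (n x u) y z) - (hAL y z (n x u)) + (hR2 x u y z) + (hL2 x u y z) - (hAL (n x u) z y) - (hAL (n y x) z u) + (hAR (n y x) z u) + (hAR z (n y x) u) - (hAL z u (n y x)) - (hL3 y x z u) - (hR3 y x u z) - (hL3 y x u z) - (hAL (n y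 z) x u) + (hAR (n y z) x u) + (hAR x (n y z) u) - (hAL x u (n y z)) + (hL2 y z x u) + (hL2 y z u x) - (hR3 y z u x) - (hL3 y z u x) - (hAL (n y u) x z) + (hAR (n y u) x z) + (hAR (n y u) x z) - (hAL (n y u) z x) + (hAR (n z x) y u) + (hAR y (n z x) u) - (hAL y u (n z x)) - (hAL x u (n z y)) + (hAL (n z y) u x) - (hR3 z y u x) - (hL3 z y u x) - (hAL (n z u) x y) + (hAR (n z u) x y) - (hAL x y (n z u)) + (hR2 z u y x) + (hL2 z u y x)

set_option maxHeartbeats 4000000 in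
private theorem jordan_main_aux
    (p s : A →ₗ[K] A →ₗ[K] A) (α β : A ≃ₗ[K] A)
    (hpre : IsBiHomPreAlternative p s α.toLinearMap β.toLinearMap) :
    IsBiHomJordan ((p + s) +
      (((p + s).comp (α.symm.toLinearMap.comp β.toLinearMap)).compl₂
        (α.toLinearMap.comp β.symm.toLinearMap)).flip) α β := by
  -- commutation lemmas for the structure maps
  have hc1 : ∀ t : A, α (β t) = β (α t) := fun t => by
    have := hpre.hαβ t; simpa using this
  have hc2 : ∀ t : A, α (β.symm t) = β.symm (α t) := fun t => by
    apply β.injective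
    rw [β.apply_symm_apply, ← hc1, β.apply_symm_apply]
  have hc3 : ∀ t : A, α.symm (β t) = β (α.symm t) := fun t => by
    apply α.injective
    rw [α.apply_symm_apply, hc1, α.apply_symm_apply]
  have hc4 : ∀ t : A, α.symm (β.symm t) = β.symm (α.symm t) := fun t => by
    apply α.injective
    rw [α.apply_symm_apply, hc2, α.apply_symm_apply]
  -- multiplicativity of the maps and their inverses
  have hap : ∀ t r : A, α (p t r) = p (α t) (α r) := fun t r => by
    have := hpre.hαp t r; simpa using this
  have has : ∀ t r : A, α (s t r) = s (α t) (α r) := fun t r => by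
    have := hpre.hαs t r; simpa using this
  have hbp : ∀ t r : A, β (p t r) = p (β t) (β r) := fun t r => by
    have := hpre.hβp t r; simpa using this
  have hbs : ∀ t r : A, β (s t r) = s (β t) (β r) := fun t r => by
    have := hpre.hβs t r; simpa using this
  have hsap : ∀ t r : A, α.symm (p t r) = p (α.symm t) (α.symm r) := fun t r => by
    apply α.injective
    rw [α.apply_symm_apply, hap, α.apply_symm_apply, α.apply_symm_apply]
  have hsas : ∀ t r : A, α.symm (s t r) = s (α.symm t) (α.symm r) := fun t r => by
    apply α.injective
    rw [α.apply_symm_apply, has, α.apply_symm_apply, α.apply_symm_apply]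
  have hsbp : ∀ t r : A, β.symm (p t r) = p (β.symm t) (β.symm r) := fun t r => by
    apply β.injective
    rw [β.apply_symm_apply, hbp, β.apply_symm_apply, β.apply_symm_apply]
  have hsbs : ∀ t r : A, β.symm (s t r) = s (β.symm t) (β.symm r) := fun t r => by
    apply β.injective
    rw [β.apply_symm_apply, hbs, β.apply_symm_apply, β.apply_symm_apply]
  -- the untwisted product
  set N : A →ₗ[K] A →ₗ[K] A :=
    ((p + s).comp α.symm.toLinearMap).compl₂ β.symm.toLinearMap with hN
  have hNapp : ∀ t r : A, N t r = p (α.symm t) (β.symm r) + s (α.symm t) (β.symm r) :=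
    fun t r => by rw [hN]; rfl
  -- linearized left alternativity for N
  have hAL : ∀ a b c : A,
      N a (N b c) - N (N a b) c + (N b (N a c) - N (N b a) c) = 0 := by
    intro a b c
    have h1 := hpre.hl (α.symm (α.symm (β.symm a))) (α.symm (α.symm (β.symm b)))
      (β.symm (β.symm c))
    have h2 := hpre.hmr (α.symm (α.symm (β.symm a))) (α.symm (α.symm (β.symm b)))
      (β.symm (β.symm c))
    have h3 := hpre.hmr (α.symm (α.symm (β.symm b))) (α.symm (α.symm (β.symm a)))
      (β.symm (β.symm c))
    simp only [preAsL, preAsM, preAsR, hNapp, map_add, LinearMap.add_apply,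
      LinearEquiv.coe_coe, hap, has, hbp, hbs, hsap, hsas, hsbp, hsbs, hc1, hc2, hc3, hc4,
      LinearEquiv.apply_symm_apply, LinearEquiv.symm_apply_apply] at h1 h2 h3 ⊢
    linear_combination (norm := module) -h1 - h2 - h3
  -- linearized right alternativity for N
  have hAR : ∀ a b c : A,
      N a (N b c) - N (N a b) c + (N a (N c b) - N (N a c) b) = 0 := by
    intro a b c
    have h1 := hpre.hr (α.symm (α.symm a)) (α.symm (β.symm (β.symm b)))
      (α.symm (β.symm (β.symm c)))
    have h2 := hpre.hml (α.symm (α.symm a)) (α.symm (β.symm (β.symm b)))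
      (α.symm (β.symm (β.symm c)))
    have h3 := hpre.hml (α.symm (α.symm a)) (α.symm (β.symm (β.symm c)))
      (α.symm (β.symm (β.symm b)))
    simp only [preAsL, preAsM, preAsR, hNapp, map_add, LinearMap.add_apply,
      LinearEquiv.coe_coe, hap, has, hbp, hbs, hsap, hsas, hsbp, hsbs, hc1, hc2, hc3, hc4,
      LinearEquiv.apply_symm_apply, LinearEquiv.symm_apply_apply] at h1 h2 h3 ⊢
    linear_combination (norm := module) -h1 - h2 - h3
  -- morphism properties of N
  have hαN : ∀ t r : A, α (N t r) = N (α t) (α r) := by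
    intro t r
    simp only [hNapp, map_add, hap, has, hc1, hc2, hc3, hc4,
      LinearEquiv.apply_symm_apply, LinearEquiv.symm_apply_apply]
  have hβN : ∀ t r : A, β (N t r) = N (β t) (β r) := by
    intro t r
    simp only [hNapp, map_add, hbp, hbs, hc1, hc2, hc3, hc4,
      LinearEquiv.apply_symm_apply, LinearEquiv.symm_apply_apply]
  set M : A →ₗ[K] A →ₗ[K] A := ((p + s) +
      (((p + s).comp (α.symm.toLinearMap.comp β.toLinearMap)).compl₂
        (α.toLinearMap.comp β.symm.toLinearMap)).flip) with hM
  have hMN : ∀ t r : A, M t r = N (α t) (β r) + N (β r) (α t) := by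
    intro t r
    rw [hM]
    simp only [hNapp, LinearMap.add_apply, LinearMap.flip_apply, LinearMap.compl₂_apply,
      LinearMap.comp_apply, LinearEquiv.coe_coe, hc1, hc2, hc3, hc4,
      LinearEquiv.apply_symm_apply, LinearEquiv.symm_apply_apply]
  refine ⟨hc1, ?_, ?_, ?_, ?_⟩
  · intro x y
    simp only [hMN, map_add, hαN, hc1, hc2, hc3, hc4,
      LinearEquiv.apply_symm_apply, LinearEquiv.symm_apply_apply]
  · intro x y
    simp only [hMN, map_add, hβN, hc1, hc2, hc3, hc4,
      LinearEquiv.apply_symm_apply, LinearEquiv.symm_apply_apply]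
  · intro x y
    simp only [hMN, hc1, hc2, hc3, hc4,
      LinearEquiv.apply_symm_apply, LinearEquiv.symm_apply_apply]
    all_goals module
  · intro x y z u
    have KEY := jordan_key_aux N hAL hAR (β (α (α (α x)))) (β (β (α (α y))))
      (β (α (α (α z)))) (β (α (α (α u))))
    simp only [map_add, LinearMap.add_apply] at KEY
    simp only [bihomAssoc, LinearEquiv.coe_coe, hMN, map_add, LinearMap.add_apply,
      hαN, hβN, hc1, hc2, hc3, hc4, LinearEquiv.apply_symm_apply,
      LinearEquiv.symm_apply_apply]
    linear_combination (norm := module) KEY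

/-- A regular BiHom-pre-alternative algebra gives a BiHom-Jordan algebra via
`x ⋆ y = x≺y + x≻y + α⁻¹β(y)≺αβ⁻¹(x) + α⁻¹β(y)≻αβ⁻¹(x)`. -/
theorem regular_biHomPreAlternative_toBiHomJordan
    (p s : A →ₗ[K] A →ₗ[K] A) (α β : A ≃ₗ[K] A)
    (hpre : IsBiHomPreAlternative p s α.toLinearMap β.toLinearMap) :
    IsBiHomJordan ((p + s) +
      (((p + s).comp (α.symm.toLinearMap.comp β.toLinearMap)).compl₂
        (α.toLinearMap.comp β.symm.toLinearMap)).flip) α β :=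
  jordan_main_aux p s α β hpre
end

section
/- Let T: V → A be an 𝒪-operator of a BiHom-alternative algebra (A, ·, α, β) associated to a bimodule (V, L, R, φ, ψ). Then (V, ≺, ≻, φ, ψ) with u ≺ v = R(T(v))u and u ≻ v = L(T(u))v is a BiHom-pre-alternative algebra, and T is a morphism from the associated BiHom-alternative algebra (V, ≺+≻, φ, ψ) to (A, ·, α, β). -/
variable {K : Type*} [Field K] {A : Type*} [AddCommGroup A] [Module K A]
  {V : Type*} [AddCommGroup V] [Module K V]

/-- An `𝒪`-operator `T` of a BiHom-alternative algebra associated to a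
bimodule induces a BiHom-pre-alternative structure on `V` by `u ≺ v = R(T(v))u`,
`u ≻ v = L(T(u))v`, and `T` is a morphism from the associated BiHom-alternative algebra. -/
theorem oOperator_toBiHomPreAlternative
    (μ : A →ₗ[K] A →ₗ[K] A) (α β : A →ₗ[K] A)
    (L R : A →ₗ[K] V →ₗ[K] V) (φ ψ : V →ₗ[K] V) (T : V →ₗ[K] A)
    (hA : IsBiHomAlternative μ α β)
    (hbim : IsBiHomAltBimodule μ α β L R φ ψ)
    (hT : ∀ u v, μ (T u) (T v) = T (L (T u) v + R (T v) u))
    (hTφ : ∀ u, T (φ u) = α (T u))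
    (hTψ : ∀ u, T (ψ u) = β (T u)) :
    IsBiHomPreAlternative ((R.comp T).flip) (L.comp T) φ ψ ∧
      ∀ u v, T ((R.comp T).flip u v + (L.comp T) u v) = μ (T u) (T v) := by

  have hT' : ∀ u v, T (R (T v) u + L (T u) v) = μ (T u) (T v) := fun u v => by
    rw [add_comm]; exact (hT u v).symm
  have key1 : ∀ a b v, L (μ (β a) (α b)) (ψ v) + L (μ (β b) (α a)) (ψ v)
      = L (β (α a)) (L (α b) v) + L (β (α b)) (L (α a) v) := by
    intro a b v
    have h1 := hbim.rep1 a v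
    have h2 := hbim.rep1 b v
    have h3 := hbim.rep1 (a + b) v
    simp only [map_add, LinearMap.add_apply, hA.hαβ] at h1 h2 h3
    linear_combination (norm := module) h3 - h1 - h2
  have key2 : ∀ a b v, R (μ (β a) (α b)) (φ v) + R (μ (β b) (α a)) (φ v)
      = R (β (α b)) (R (β a) v) + R (β (α a)) (R (β b) v) := by
    intro a b v
    have h1 := hbim.rep2 a v
    have h2 := hbim.rep2 b v
    have h3 := hbim.rep2 (a + b) v
    simp only [map_add, LinearMap.add_apply, hA.hαβ] at h1 h2 h3
    linear_combination (norm := module) h3 - h1 - h2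
  refine ⟨⟨hbim.hφψ, ?_, ?_, ?_, ?_, ?_, ?_, ?_, ?_⟩, fun u v => by
    simp only [LinearMap.flip_apply, LinearMap.comp_apply]; exact hT' u v⟩
  · intro x y
    simp only [LinearMap.flip_apply, LinearMap.comp_apply, hbim.hφR, hTφ]
  · intro x y
    simp only [LinearMap.flip_apply, LinearMap.comp_apply, hbim.hφL, hTφ]
  · intro x y
    simp only [LinearMap.flip_apply, LinearMap.comp_apply, hbim.hψR, hTψ]
  · intro x y
    simp only [LinearMap.flip_apply, LinearMap.comp_apply, hbim.hψL, hTψ]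
  · -- hr
    intro x y z
    simp only [preAsR, LinearMap.flip_apply, LinearMap.comp_apply, hT']
    simp only [hTφ, hTψ, hA.hαβ]
    rw [sub_add_sub_comm, sub_eq_zero]
    exact (key2 (T y) (T z) x).symm
  · -- hl
    intro x y z
    simp only [preAsL, LinearMap.flip_apply, LinearMap.comp_apply, hT']
    simp only [hTφ, hTψ, hA.hαβ]
    rw [sub_add_sub_comm, sub_eq_zero]
    exact key1 (T x) (T y) z
  · -- hmr
    intro x y z
    simp only [preAsM, preAsR, LinearMap.flip_apply, LinearMap.comp_apply, hT']
    simp only [hTφ, hTψ, hA.hαβ]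
    have h := hbim.rep3 (T x) (T z) y
    simp only [hA.hαβ] at h
    linear_combination (norm := module) h
  · -- hml
    intro x y z
    simp only [preAsM, preAsL, LinearMap.flip_apply, LinearMap.comp_apply, hT']
    simp only [hTφ, hTψ, hA.hαβ]
    have h := hbim.rep4 (T z) (T x) y
    simp only [hA.hαβ, hbim.hφψ] at h
    linear_combination (norm := module) - h
end

section
/- Let (A, μ, α, β) be a BiHom-alternative algebra and R: A → A a Rota-Baxter operator of weight 0 commuting with α and β. Then (A, ≺, ≻, α, β) with x ≺ y = x·R(y) and x ≻ y = R(x)·y is a BiHom-pre-alternative algebra. -/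
variable {K : Type*} [Field K] {A : Type*} [AddCommGroup A] [Module K A]
  {V : Type*} [AddCommGroup V] [Module K V]

/-- A Rota-Baxter operator of weight 0 on a BiHom-alternative algebra,
commuting with the structure maps, induces a BiHom-pre-alternative algebra with
`x ≺ y = x·R(y)` and `x ≻ y = R(x)·y`. -/
theorem rotaBaxter_toBiHomPreAlternative
    (μ : A →ₗ[K] A →ₗ[K] A) (α β : A →ₗ[K] A) (Rb : A →ₗ[K] A)
    (hA : IsBiHomAlternative μ α β)
    (hRα : ∀ x, Rb (α x) = α (Rb x))
    (hRβ : ∀ x, Rb (β x) = β (Rb x))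
    (hRB : ∀ x y, μ (Rb x) (Rb y) = Rb (μ (Rb x) y + μ x (Rb y))) :
    IsBiHomPreAlternative (μ.compl₂ Rb) (μ.comp Rb) α β := by

  have hp : ∀ x y, (μ.compl₂ Rb) x y = μ x (Rb y) := fun _ _ => rfl
  have hs : ∀ x y, (μ.comp Rb) x y = μ (Rb x) y := fun _ _ => rfl
  have eR : ∀ x y z, preAsR (μ.compl₂ Rb) (μ.comp Rb) α β x y z
      = - bihomAssoc μ α β x (Rb y) (Rb z) := by
    intro x y z
    simp only [preAsR, bihomAssoc, hp, hs]
    rw [add_comm (μ y (Rb z)), ← hRB, hRβ]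
    abel
  have eM : ∀ x y z, preAsM (μ.compl₂ Rb) (μ.comp Rb) α β x y z
      = - bihomAssoc μ α β (Rb x) y (Rb z) := by
    intro x y z
    simp only [preAsM, bihomAssoc, hp, hs, hRα, hRβ]
    abel
  have eL : ∀ x y z, preAsL (μ.compl₂ Rb) (μ.comp Rb) α β x y z
      = - bihomAssoc μ α β (Rb x) (Rb y) z := by
    intro x y z
    simp only [preAsL, bihomAssoc, hp, hs]
    rw [add_comm (μ x (Rb y)), ← hRB, hRα]
    abel
  refine ⟨hA.hαβ, ?_, ?_, ?_, ?_, ?_, ?_, ?_, ?_⟩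
  · intro x y; simp only [hp, hA.hα, hRα]
  · intro x y; simp only [hs, hA.hα, hRα]
  · intro x y; simp only [hp, hA.hβ, hRβ]
  · intro x y; simp only [hs, hA.hβ, hRβ]
  · intro x y z
    rw [eR, eR, hRα, hRα, hRβ, hRβ, ← neg_add, neg_eq_zero]
    exact hA.hright x (Rb y) (Rb z)
  · intro x y z
    rw [eL, eL, hRα, hRα, hRβ, hRβ, ← neg_add, neg_eq_zero]
    exact hA.hleft (Rb x) (Rb y) z
  · intro x y z
    rw [eM, eR, hRα, hRβ, ← neg_add, neg_eq_zero]
    exact hA.hleft (Rb x) y (Rb z)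
  · intro x y z
    rw [eM, eL, hRα, hRβ, ← neg_add, neg_eq_zero]
    exact hA.hright (Rb x) y (Rb z)
end

section
/- Let D be a bijective 1-BiHom-cocycle of a BiHom-alternative algebra (A, ·, α, β) into a bimodule (V, L, R, φ, ψ). Then D⁻¹: V → A is an 𝒪-operator associated to (V, L, R, φ, ψ). -/
variable {K : Type*} [Field K] {A : Type*} [AddCommGroup A] [Module K A]
  {V : Type*} [AddCommGroup V] [Module K V]

/-- The inverse of a bijective `1`-BiHom-cocycle of a BiHom-alternative
algebra into a bimodule is an `𝒪`-operator associated to that bimodule. -/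
theorem bijective_cocycle_inv_isOOperator
    (μ : A →ₗ[K] A →ₗ[K] A) (α β : A →ₗ[K] A)
    (L R : A →ₗ[K] V →ₗ[K] V) (φ ψ : V →ₗ[K] V) (D : A ≃ₗ[K] V)
    (hA : IsBiHomAlternative μ α β)
    (hbim : IsBiHomAltBimodule μ α β L R φ ψ)
    (hcoc : ∀ x y, D (μ x y) = L x (D y) + R y (D x))
    (hφD : ∀ x, φ (D x) = D (α x))
    (hψD : ∀ x, ψ (D x) = D (β x)) :
    (∀ u v, μ (D.symm u) (D.symm v) = D.symm (L (D.symm u) v + R (D.symm v) u)) ∧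
    (∀ u, D.symm (φ u) = α (D.symm u)) ∧ (∀ u, D.symm (ψ u) = β (D.symm u)) := by
  refine ⟨fun u v => ?_, fun u => ?_, fun u => ?_⟩
  · apply D.injective
    rw [D.apply_symm_apply, hcoc, D.apply_symm_apply, D.apply_symm_apply]
  · apply D.injective
    rw [D.apply_symm_apply, ← hφD, D.apply_symm_apply]
  · apply D.injective
    rw [D.apply_symm_apply, ← hψD, D.apply_symm_apply]
end

section
/- Let (A, ↖, ↙, ↗, ↘, α, β) be a BiHom-alternative quadri-algebra. Then (A, ∨, ∧, α, β) with x∨y = x↘y + x↙y and x∧y = x↗y + x↖y is a BiHom-pre-alternative algebra (the vertical structure), and (A, ∗, α, β) with x∗y = x↘y + x↗y + x↙y + x↖y is a BiHom-alternative algebra. -/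
variable {K : Type*} [Field K] {A : Type*} [AddCommGroup A] [Module K A]
  {V : Type*} [AddCommGroup V] [Module K V]

set_option linter.unusedVariables false

/-- Quadri-associator `{x,y,z}^r = (x↖y)↖β(z) − α(x)↖(y∗z)`. -/
def qAsR (nw sw ne se : A →ₗ[K] A →ₗ[K] A) (α β : A →ₗ[K] A) (x y z : A) : A :=
  nw (nw x y) (β z) - nw (α x) (nw y z + sw y z + ne y z + se y z)

/-- Quadri-associator `{x,y,z}^l = (x∗y)↘β(z) − α(x)↘(y↘z)`. -/
def qAsL (nw sw ne se : A →ₗ[K] A →ₗ[K] A) (α β : A →ₗ[K] A) (x y z : A) : A :=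
  se (nw x y + sw x y + ne x y + se x y) (β z) - se (α x) (se y z)

/-- Quadri-associator `{x,y,z}^{ne} = (x∧y)↗β(z) − α(x)↗(y≻z)`. -/
def qAsNE (nw sw ne se : A →ₗ[K] A →ₗ[K] A) (α β : A →ₗ[K] A) (x y z : A) : A :=
  ne (ne x y + nw x y) (β z) - ne (α x) (ne y z + se y z)

/-- Quadri-associator `{x,y,z}^{sw} = (x≺y)↙β(z) − α(x)↙(y∨z)`. -/
def qAsSW (nw sw ne se : A →ₗ[K] A →ₗ[K] A) (α β : A →ₗ[K] A) (x y z : A) : A :=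
  sw (nw x y + sw x y) (β z) - sw (α x) (se y z + sw y z)

/-- Quadri-associator `{x,y,z}^n = (x↗y)↖β(z) − α(x)↗(y≺z)`. -/
def qAsN (nw sw ne se : A →ₗ[K] A →ₗ[K] A) (α β : A →ₗ[K] A) (x y z : A) : A :=
  nw (ne x y) (β z) - ne (α x) (nw y z + sw y z)

/-- Quadri-associator `{x,y,z}^w = (x↙y)↖β(z) − α(x)↙(y∧z)`. -/
def qAsW (nw sw ne se : A →ₗ[K] A →ₗ[K] A) (α β : A →ₗ[K] A) (x y z : A) : A :=
  nw (sw x y) (β z) - sw (α x) (ne y z + nw y z)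

/-- Quadri-associator `{x,y,z}^s = (x≻y)↙β(z) − α(x)↘(y↙z)`. -/
def qAsS (nw sw ne se : A →ₗ[K] A →ₗ[K] A) (α β : A →ₗ[K] A) (x y z : A) : A :=
  sw (ne x y + se x y) (β z) - se (α x) (sw y z)

/-- Quadri-associator `{x,y,z}^e = (x∨y)↗β(z) − α(x)↘(y↗z)`. -/
def qAsE (nw sw ne se : A →ₗ[K] A →ₗ[K] A) (α β : A →ₗ[K] A) (x y z : A) : A :=
  ne (se x y + sw x y) (β z) - se (α x) (ne y z)

/-- Quadri-associator `{x,y,z}^m = (x↘y)↖β(z) − α(x)↘(y↖z)`. -/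
def qAsM (nw sw ne se : A →ₗ[K] A →ₗ[K] A) (α β : A →ₗ[K] A) (x y z : A) : A :=
  nw (se x y) (β z) - se (α x) (nw y z)

/-- A BiHom-alternative quadri-algebra structure on `A`,
with operations `nw = ↖`, `sw = ↙`, `ne = ↗`, `se = ↘`. -/
structure IsBiHomAltQuadri (nw sw ne se : A →ₗ[K] A →ₗ[K] A) (α β : A →ₗ[K] A) : Prop where
  hαβ : ∀ x, α (β x) = β (α x)
  hαnw : ∀ x y, α (nw x y) = nw (α x) (α y)
  hαsw : ∀ x y, α (sw x y) = sw (α x) (α y)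
  hαne : ∀ x y, α (ne x y) = ne (α x) (α y)
  hαse : ∀ x y, α (se x y) = se (α x) (α y)
  hβnw : ∀ x y, β (nw x y) = nw (β x) (β y)
  hβsw : ∀ x y, β (sw x y) = sw (β x) (β y)
  hβne : ∀ x y, β (ne x y) = ne (β x) (β y)
  hβse : ∀ x y, β (se x y) = se (β x) (β y)
  ax1 : ∀ x y z, qAsR nw sw ne se α β (β x) (α y) z + qAsM nw sw ne se α β (β y) (α x) z = 0
  ax2 : ∀ x y z, qAsN nw sw ne se α β (β x) (α y) z + qAsW nw sw ne se α β (β y) (α x) z = 0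
  ax3 : ∀ x y z, qAsNE nw sw ne se α β (β x) (α y) z + qAsE nw sw ne se α β (β y) (α x) z = 0
  ax4 : ∀ x y z, qAsSW nw sw ne se α β (β x) (α y) z + qAsS nw sw ne se α β (β y) (α x) z = 0
  ax5 : ∀ x y z, qAsL nw sw ne se α β (β x) (α y) z + qAsL nw sw ne se α β (β y) (α x) z = 0
  ax6 : ∀ x y z, qAsR nw sw ne se α β x (β y) (α z) + qAsR nw sw ne se α β x (β z) (α y) = 0
  ax7 : ∀ x y z, qAsN nw sw ne se α β x (β y) (α z) + qAsNE nw sw ne se α β x (β z) (α y) = 0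
  ax8 : ∀ x y z, qAsW nw sw ne se α β x (β y) (α z) + qAsSW nw sw ne se α β x (β z) (α y) = 0
  ax9 : ∀ x y z, qAsM nw sw ne se α β x (β y) (α z) + qAsL nw sw ne se α β x (β z) (α y) = 0
  ax10 : ∀ x y z, qAsS nw sw ne se α β x (β y) (α z) + qAsE nw sw ne se α β x (β z) (α y) = 0

/-- The vertical structure `(A, ∧ = ↗+↖, ∨ = ↘+↙, α, β)` (with `∧` as `≺`
and `∨` as `≻`) of a BiHom-alternative quadri-algebra is a BiHom-pre-alternative algebra, and
the total sum `∗` of all four operations is a BiHom-alternative multiplication. -/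
theorem quadri_vertical_preAlternative_and_total_alternative
    (nw sw ne se : A →ₗ[K] A →ₗ[K] A) (α β : A →ₗ[K] A)
    (hq : IsBiHomAltQuadri nw sw ne se α β) :
    IsBiHomPreAlternative (ne + nw) (se + sw) α β ∧
      IsBiHomAlternative (nw + sw + ne + se) α β := by
  have hp : IsBiHomPreAlternative (ne + nw) (se + sw) α β := by
    constructor
    · exact hq.hαβ
    · intro x y; simp [LinearMap.add_apply, hq.hαne, hq.hαnw]
    · intro x y; simp [LinearMap.add_apply, hq.hαse, hq.hαsw]
    · intro x y; simp [LinearMap.add_apply, hq.hβne, hq.hβnw]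
    · intro x y; simp [LinearMap.add_apply, hq.hβse, hq.hβsw]
    · intro x y z
      have h1 := hq.ax6 x y z
      have h2 := hq.ax7 x y z
      have h3 := hq.ax7 x z y
      simp only [qAsR, qAsN, qAsNE, preAsR, LinearMap.add_apply, map_add, map_sub]
        at h1 h2 h3 ⊢
      linear_combination (norm := abel) h1 + h2 + h3
    · intro x y z
      have h1 := hq.ax5 x y z
      have h2 := hq.ax4 x y z
      have h3 := hq.ax4 y x z
      simp only [qAsL, qAsSW, qAsS, preAsL, LinearMap.add_apply, map_add, map_sub]
        at h1 h2 h3 ⊢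
      linear_combination (norm := abel) h1 + h2 + h3
    · intro x y z
      have h1 := hq.ax1 y x z
      have h2 := hq.ax2 y x z
      have h3 := hq.ax3 y x z
      simp only [qAsR, qAsM, qAsN, qAsW, qAsNE, qAsE, preAsM, preAsR,
        LinearMap.add_apply, map_add, map_sub] at h1 h2 h3 ⊢
      linear_combination (norm := abel) h1 + h2 + h3
    · intro x y z
      have h1 := hq.ax9 x y z
      have h2 := hq.ax10 x z y
      have h3 := hq.ax8 x y z
      simp only [qAsM, qAsL, qAsS, qAsE, qAsW, qAsSW, preAsM, preAsL,
        LinearMap.add_apply, map_add, map_sub] at h1 h2 h3 ⊢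
      linear_combination (norm := abel) h1 + h2 + h3
  refine ⟨hp, ?_⟩
  constructor
  · exact hq.hαβ
  · intro x y; simp [LinearMap.add_apply, hq.hαne, hq.hαnw, hq.hαse, hq.hαsw]
  · intro x y; simp [LinearMap.add_apply, hq.hβne, hq.hβnw, hq.hβse, hq.hβsw]
  · intro x y z
    have h1 := hp.hl x y z
    have h2 := hp.hmr x y z
    have h3 := hp.hmr y x z
    simp only [preAsL, preAsM, preAsR, bihomAssoc, LinearMap.add_apply, map_add, map_sub]
      at h1 h2 h3 ⊢
    linear_combination (norm := abel) - h1 - h2 - h3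
  · intro x y z
    have h1 := hp.hr x y z
    have h2 := hp.hml x y z
    have h3 := hp.hml x z y
    simp only [preAsL, preAsM, preAsR, bihomAssoc, LinearMap.add_apply, map_add, map_sub]
      at h1 h2 h3 ⊢
    linear_combination (norm := abel) - h1 - h2 - h3
end

section
/- Let T be an 𝒪-operator of a BiHom-pre-alternative algebra (A, ≺, ≻, α, β) associated to a bimodule (V, L_≺, R_≺, L_≻, R_≻, φ, ψ). Then T is an 𝒪-operator of the associated BiHom-alternative algebra (A, ∘, α, β), with ∘ = ≺ + ≻, associated to the bimodule (V, L_≺ + L_≻, R_≺ + R_≻, φ, ψ). -/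
variable {K : Type*} [Field K] {A : Type*} [AddCommGroup A] [Module K A]
  {V : Type*} [AddCommGroup V] [Module K V]

/-- A bimodule of a BiHom-pre-alternative algebra `(A, p, s, α, β)` (with `p = ≺`, `s = ≻`). -/
structure IsBiHomPreAltBimodule (p s : A →ₗ[K] A →ₗ[K] A) (α β : A →ₗ[K] A)
    (Lp Rp Ls Rs : A →ₗ[K] V →ₗ[K] V) (φ ψ : V →ₗ[K] V) : Prop where
  hφψ : ∀ v, φ (ψ v) = ψ (φ v)
  hφLp : ∀ x v, φ (Lp x v) = Lp (α x) (φ v)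
  hψLp : ∀ x v, ψ (Lp x v) = Lp (β x) (ψ v)
  hφRp : ∀ x v, φ (Rp x v) = Rp (α x) (φ v)
  hψRp : ∀ x v, ψ (Rp x v) = Rp (β x) (ψ v)
  hφLs : ∀ x v, φ (Ls x v) = Ls (α x) (φ v)
  hψLs : ∀ x v, ψ (Ls x v) = Ls (β x) (ψ v)
  hφRs : ∀ x v, φ (Rs x v) = Rs (α x) (φ v)
  hψRs : ∀ x v, ψ (Rs x v) = Rs (β x) (ψ v)
  b1 : ∀ x v, Ls (p (β x) (α x) + s (β x) (α x)) (ψ v) = Ls (α (β x)) (Ls (α x) v)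
  b2 : ∀ x y v, Rs (β y) (Lp (β x) (φ v) + Ls (β x) (φ v) + Rp (α x) (ψ v) + Rs (α x) (ψ v)) =
    Ls (α (β x)) (Rs y (φ v)) + Rs (s (α x) y) (φ (ψ v))
  b3 : ∀ x v, Rp (α (β x)) (Rp (β x) v) = Rp (p (β x) (α x) + s (β x) (α x)) (φ v)
  b4 : ∀ x y v, Lp (α y) (Lp (β x) (φ v) + Ls (β x) (φ v) + Rp (α x) (ψ v) + Rs (α x) (ψ v)) =
    Lp (p y (β x)) (φ (ψ v)) + Rp (α (β x)) (Lp y (ψ v))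
  b5 : ∀ x y v, Lp (s (β x) (α y) + p (β y) (α x)) (ψ v) =
    Ls (α (β x)) (Lp (α y) v) + Lp (α (β y)) (Lp (α x) v + Ls (α x) v)
  b6 : ∀ x y v, Rp (β y) (Ls (β x) (φ v) + Rp (α x) (ψ v)) =
    Ls (α (β x)) (Rp y (φ v)) + Rp (p (α x) y + s (α x) y) (φ (ψ v))
  b7 : ∀ x y v, Rp (β y) (Rs (α x) (ψ v) + Lp (β x) (φ v)) =
    Rs (p (α x) y) (φ (ψ v)) + Lp (α (β x)) (Rp y (φ v) + Rs y (φ v))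
  b8 : ∀ x y v, Rp (α (β y)) (Rs (β x) v) + Rs (α (β x)) (Rp (β y) v + Rs (β y) v) =
    Rs (p (β x) (α y)) (φ v) + Rs (s (β y) (α x)) (φ v)
  b9 : ∀ x y v, Rp (α (β y)) (Ls x (ψ v)) + Ls (p x (β y) + s x (β y)) (φ (ψ v)) =
    Ls (α x) (Rp (α y) (ψ v) + Ls (β y) (φ v))
  b10 : ∀ x y v, Lp (s x (β y)) (φ (ψ v)) + Rs (α (β y)) (Lp x (ψ v) + Ls x (ψ v)) =
    Ls (α x) (Lp (β y) (φ v)) + Ls (α x) (Rs (α y) (ψ v))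

/-- An `𝒪`-operator of a BiHom-pre-alternative algebra associated to a
bimodule is an `𝒪`-operator of the associated BiHom-alternative algebra `(A, ∘ = ≺+≻, α, β)`
associated to the bimodule `(V, L_≺+L_≻, R_≺+R_≻, φ, ψ)`. -/
theorem oOperator_preAlt_toOOperator_alt
    (p s : A →ₗ[K] A →ₗ[K] A) (α β : A →ₗ[K] A)
    (Lp Rp Ls Rs : A →ₗ[K] V →ₗ[K] V) (φ ψ : V →ₗ[K] V) (T : V →ₗ[K] A)
    (hpre : IsBiHomPreAlternative p s α β)
    (hbim : IsBiHomPreAltBimodule p s α β Lp Rp Ls Rs φ ψ)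
    (hTs : ∀ u v, s (T u) (T v) = T (Ls (T u) v + Rs (T v) u))
    (hTp : ∀ u v, p (T u) (T v) = T (Lp (T u) v + Rp (T v) u))
    (hTφ : ∀ u, T (φ u) = α (T u))
    (hTψ : ∀ u, T (ψ u) = β (T u)) :
    IsBiHomAltBimodule (p + s) α β (Lp + Ls) (Rp + Rs) φ ψ ∧
      ∀ u v, (p + s) (T u) (T v) = T ((Lp + Ls) (T u) v + (Rp + Rs) (T v) u) := by
  constructor
  · constructor
    · exact hbim.hφψ
    · intro x v
      simp only [LinearMap.add_apply, map_add, hbim.hφLp, hbim.hφLs]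
    · intro x v
      simp only [LinearMap.add_apply, map_add, hbim.hφRp, hbim.hφRs]
    · intro x v
      simp only [LinearMap.add_apply, map_add, hbim.hψLp, hbim.hψLs]
    · intro x v
      simp only [LinearMap.add_apply, map_add, hbim.hψRp, hbim.hψRs]
    · intro x v
      have h := congrArg₂ (· + ·) (hbim.b1 x v) (hbim.b5 x x v)
      simp only [map_add, LinearMap.add_apply] at h ⊢
      abel_nf at h ⊢
      exact h
    · intro x v
      have h := congrArg₂ (· + ·) (hbim.b3 x v) (hbim.b8 x x v)
      simp only [map_add, LinearMap.add_apply] at h ⊢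
      abel_nf at h ⊢
      exact h.symm
    · intro x y v
      have h := congrArg₂ (· + ·) (hbim.b2 x y v)
        (congrArg₂ (· + ·) (hbim.b6 x y v) (hbim.b7 x y v))
      simp only [map_add, LinearMap.add_apply] at h ⊢
      linear_combination (norm := abel) h
    · intro x y v
      have h1 := hbim.b4 x y v
      have h2 := hbim.b9 y x v
      have h3 := hbim.b10 y x v
      simp only [map_add, LinearMap.add_apply] at h1 h2 h3 ⊢
      linear_combination (norm := abel) h1 - h2 - h3
  · intro u v
    simp only [LinearMap.add_apply, hTp u v, hTs u v, map_add]
    abel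
end

section
/- Let (A, ∗, α, β) be a BiHom-alternative algebra and R, P two commuting Rota-Baxter operators of weight 0 on A, each commuting with α and β. Then P is a Rota-Baxter operator of weight 0 on the BiHom-pre-alternative algebra (A, ≺_R, ≻_R, α, β), where x ≺_R y = x∗R(y) and x ≻_R y = R(x)∗y. -/
variable {K : Type*} [Field K] {A : Type*} [AddCommGroup A] [Module K A]
  {V : Type*} [AddCommGroup V] [Module K V]

/-- If `R, P` are commuting Rota-Baxter operators of weight 0 on a
BiHom-alternative algebra `(A, ∗, α, β)`, each commuting with `α, β`, then `P` is a
Rota-Baxter operator of weight 0 on the BiHom-pre-alternative algebra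
`(A, ≺_R, ≻_R, α, β)` where `x ≺_R y = x∗R(y)` and `x ≻_R y = R(x)∗y`. -/
theorem rotaBaxter_pair_toRotaBaxter_preAlt
    (μ : A →ₗ[K] A →ₗ[K] A) (α β : A →ₗ[K] A) (R P : A →ₗ[K] A)
    (hA : IsBiHomAlternative μ α β)
    (hRα : ∀ x, R (α x) = α (R x)) (hRβ : ∀ x, R (β x) = β (R x))
    (hPα : ∀ x, P (α x) = α (P x)) (hPβ : ∀ x, P (β x) = β (P x))
    (hRP : ∀ x, R (P x) = P (R x))
    (hRB : ∀ x y, μ (R x) (R y) = R (μ (R x) y + μ x (R y)))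
    (hPB : ∀ x y, μ (P x) (P y) = P (μ (P x) y + μ x (P y))) :
    (∀ x y, (μ.comp R) (P x) (P y) =
        P ((μ.comp R) x (P y) + (μ.comp R) (P x) y)) ∧
    (∀ x y, (μ.compl₂ R) (P x) (P y) =
        P ((μ.compl₂ R) x (P y) + (μ.compl₂ R) (P x) y)) := by
  constructor
  · intro x y
    simp only [LinearMap.comp_apply, hRP]
    rw [hPB (R x) y, add_comm]
  · intro x y
    simp only [LinearMap.compl₂_apply, hRP]
    rw [hPB x (R y), add_comm]
end

section
/- Let (A, ∗, α, β) be a BiHom-alternative algebra and R, P two commuting Rota-Baxter operators of weight 0 on A, each commuting with α and β. Then A carries a BiHom-alternative quadri-algebra structure with operations x↘y = R(P(x))∗y, x↗y = R(x)∗P(y), x↙y = P(x)∗R(y), x↖y = x∗R(P(y)), and structure maps α, β. -/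
variable {K : Type*} [Field K] {A : Type*} [AddCommGroup A] [Module K A]
  {V : Type*} [AddCommGroup V] [Module K V]

set_option linter.unusedVariables false

/-- Two commuting Rota-Baxter operators of weight 0 on a BiHom-alternative
algebra, each commuting with the structure maps, induce a BiHom-alternative quadri-algebra:
`x↘y = R(P(x))∗y`, `x↗y = R(x)∗P(y)`, `x↙y = P(x)∗R(y)`, `x↖y = x∗R(P(y))`. -/
theorem rotaBaxter_pair_toAltQuadri
    (μ : A →ₗ[K] A →ₗ[K] A) (α β : A →ₗ[K] A) (R P : A →ₗ[K] A)
    (hA : IsBiHomAlternative μ α β)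
    (hRα : ∀ x, R (α x) = α (R x)) (hRβ : ∀ x, R (β x) = β (R x))
    (hPα : ∀ x, P (α x) = α (P x)) (hPβ : ∀ x, P (β x) = β (P x))
    (hRP : ∀ x, R (P x) = P (R x))
    (hRB : ∀ x y, μ (R x) (R y) = R (μ (R x) y + μ x (R y)))
    (hPB : ∀ x y, μ (P x) (P y) = P (μ (P x) y + μ x (P y))) :
    IsBiHomAltQuadri (μ.compl₂ (R.comp P)) ((μ.comp P).compl₂ R)
      ((μ.comp R).compl₂ P) (μ.comp (R.comp P)) α β := by
  have nwd : ∀ a b, (μ.compl₂ (R.comp P)) a b = μ a (R (P b)) := fun a b => rfl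
  have swd : ∀ a b, ((μ.comp P).compl₂ R) a b = μ (P a) (R b) := fun a b => rfl
  have ned : ∀ a b, ((μ.comp R).compl₂ P) a b = μ (R a) (P b) := fun a b => rfl
  have sed : ∀ a b, (μ.comp (R.comp P)) a b = μ (R (P a)) b := fun a b => rfl
  -- product identities
  have E3 : ∀ b c, P (μ (R b) (P c) + μ (R (P b)) c) = μ (R (P b)) (P c) := by
    intro b c; rw [hRP b, hPB (R b) c]; congr 1; abel
  have E4 : ∀ a b, P (μ a (R (P b)) + μ (P a) (R b)) = μ (P a) (R (P b)) := by
    intro a b; rw [hRP b, hPB a (R b)]; congr 1; abel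
  have E6 : ∀ b c, P (μ b (R (P c)) + μ (P b) (R c)) = μ (P b) (R (P c)) := by
    intro b c; rw [hRP c, hPB b (R c)]; congr 1; abel
  have E8 : ∀ a b, P (μ (R a) (P b) + μ (R (P a)) b) = μ (R (P a)) (P b) := by
    intro a b; rw [hRP a, hPB (R a) b]; congr 1; abel
  have hQ : ∀ b c, R (P (μ b (R (P c)) + μ (P b) (R c) + μ (R b) (P c) + μ (R (P b)) c))
      = μ (R (P b)) (R (P c)) := by
    intro b c
    rw [hRB (P b) (P c)]
    rw [show μ (R (P b)) (P c) = P (μ (R (P b)) c + μ (R b) (P c)) by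
      rw [hRP b, hPB (R b) c, ← hRP b]]
    rw [show μ (P b) (R (P c)) = P (μ (P b) (R c) + μ b (R (P c))) by
      rw [hRP c, hPB b (R c), ← hRP c]]
    rw [← map_add P]
    congr 2; abel
  have Asd : ∀ a b c, bihomAssoc μ α β a b c = μ (α a) (μ b c) - μ (μ a b) (β c) :=
    fun a b c => rfl
  -- values of the nine quadri-associators
  have hvR : ∀ a b c, qAsR (μ.compl₂ (R.comp P)) ((μ.comp P).compl₂ R)
      ((μ.comp R).compl₂ P) (μ.comp (R.comp P)) α β a b c
      = -(bihomAssoc μ α β a (R (P b)) (R (P c))) := by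
    intro a b c
    simp only [qAsR, nwd, swd, ned, sed, Asd]
    rw [hQ b c, hPβ, hRβ]; abel
  have hvM : ∀ a b c, qAsM (μ.compl₂ (R.comp P)) ((μ.comp P).compl₂ R)
      ((μ.comp R).compl₂ P) (μ.comp (R.comp P)) α β a b c
      = -(bihomAssoc μ α β (R (P a)) b (R (P c))) := by
    intro a b c
    simp only [qAsM, nwd, swd, ned, sed, Asd]
    rw [hPβ, hRβ, hPα, hRα]; abel
  have hvL : ∀ a b c, qAsL (μ.compl₂ (R.comp P)) ((μ.comp P).compl₂ R)
      ((μ.comp R).compl₂ P) (μ.comp (R.comp P)) α β a b c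
      = -(bihomAssoc μ α β (R (P a)) (R (P b)) c) := by
    intro a b c
    simp only [qAsL, nwd, swd, ned, sed, Asd]
    rw [hQ a b, hPα, hRα]; abel
  have hvNE : ∀ a b c, qAsNE (μ.compl₂ (R.comp P)) ((μ.comp P).compl₂ R)
      ((μ.comp R).compl₂ P) (μ.comp (R.comp P)) α β a b c
      = -(bihomAssoc μ α β (R a) (R (P b)) (P c)) := by
    intro a b c
    simp only [qAsNE, nwd, swd, ned, sed, Asd]
    rw [← hRB a (P b), E3 b c, hPβ, hRα]; abel
  have hvE : ∀ a b c, qAsE (μ.compl₂ (R.comp P)) ((μ.comp P).compl₂ R)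
      ((μ.comp R).compl₂ P) (μ.comp (R.comp P)) α β a b c
      = -(bihomAssoc μ α β (R (P a)) (R b) (P c)) := by
    intro a b c
    simp only [qAsE, nwd, swd, ned, sed, Asd]
    rw [← hRB (P a) b, hPβ, hPα, hRα]; abel
  have hvSW : ∀ a b c, qAsSW (μ.compl₂ (R.comp P)) ((μ.comp P).compl₂ R)
      ((μ.comp R).compl₂ P) (μ.comp (R.comp P)) α β a b c
      = -(bihomAssoc μ α β (P a) (R (P b)) (R c)) := by
    intro a b c
    simp only [qAsSW, nwd, swd, ned, sed, Asd]
    rw [E4 a b, ← hRB (P b) c, hRβ, hPα]; abel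
  have hvS : ∀ a b c, qAsS (μ.compl₂ (R.comp P)) ((μ.comp P).compl₂ R)
      ((μ.comp R).compl₂ P) (μ.comp (R.comp P)) α β a b c
      = -(bihomAssoc μ α β (R (P a)) (P b) (R c)) := by
    intro a b c
    simp only [qAsS, nwd, swd, ned, sed, Asd]
    rw [E8 a b, hRβ, hPα, hRα]; abel
  have hvN : ∀ a b c, qAsN (μ.compl₂ (R.comp P)) ((μ.comp P).compl₂ R)
      ((μ.comp R).compl₂ P) (μ.comp (R.comp P)) α β a b c
      = -(bihomAssoc μ α β (R a) (P b) (R (P c))) := by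
    intro a b c
    simp only [qAsN, nwd, swd, ned, sed, Asd]
    rw [E6 b c, hPβ, hRβ, hRα]; abel
  have hvW : ∀ a b c, qAsW (μ.compl₂ (R.comp P)) ((μ.comp P).compl₂ R)
      ((μ.comp R).compl₂ P) (μ.comp (R.comp P)) α β a b c
      = -(bihomAssoc μ α β (P a) (R b) (R (P c))) := by
    intro a b c
    simp only [qAsW, nwd, swd, ned, sed, Asd]
    rw [← hRB b (P c), hPβ, hRβ, hPα]; abel
  refine ⟨hA.hαβ, ?_, ?_, ?_, ?_, ?_, ?_, ?_, ?_, ?_, ?_, ?_, ?_, ?_, ?_, ?_, ?_, ?_, ?_⟩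
  · intro x y; rw [nwd, nwd, hA.hα, hPα, hRα]
  · intro x y; rw [swd, swd, hA.hα, hPα, hRα]
  · intro x y; rw [ned, ned, hA.hα, hPα, hRα]
  · intro x y; rw [sed, sed, hA.hα, hPα, hRα]
  · intro x y; rw [nwd, nwd, hA.hβ, hPβ, hRβ]
  · intro x y; rw [swd, swd, hA.hβ, hPβ, hRβ]
  · intro x y; rw [ned, ned, hA.hβ, hPβ, hRβ]
  · intro x y; rw [sed, sed, hA.hβ, hPβ, hRβ]
  · intro x y z
    simp only [hvR, hvM, hPα, hRα, hPβ, hRβ, ← neg_add]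
    rw [hA.hleft x (R (P y)) (R (P z)), neg_zero]
  · intro x y z
    simp only [hvN, hvW, hPα, hRα, hPβ, hRβ, ← neg_add]
    rw [hA.hleft (R x) (P y) (R (P z)), neg_zero]
  · intro x y z
    simp only [hvNE, hvE, hPα, hRα, hPβ, hRβ, ← neg_add]
    rw [hA.hleft (R x) (R (P y)) (P z), neg_zero]
  · intro x y z
    simp only [hvSW, hvS, hPα, hRα, hPβ, hRβ, ← neg_add]
    rw [hA.hleft (P x) (R (P y)) (R z), neg_zero]
  · intro x y z
    simp only [hvL, hvL, hPα, hRα, hPβ, hRβ, ← neg_add]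
    rw [hA.hleft (R (P x)) (R (P y)) z, neg_zero]
  · intro x y z
    simp only [hvR, hvR, hPα, hRα, hPβ, hRβ, ← neg_add]
    rw [hA.hright x (R (P y)) (R (P z)), neg_zero]
  · intro x y z
    simp only [hvN, hvNE, hPα, hRα, hPβ, hRβ, ← neg_add]
    rw [hA.hright (R x) (P y) (R (P z)), neg_zero]
  · intro x y z
    simp only [hvW, hvSW, hPα, hRα, hPβ, hRβ, ← neg_add]
    rw [hA.hright (P x) (R y) (R (P z)), neg_zero]
  · intro x y z
    simp only [hvM, hvL, hPα, hRα, hPβ, hRβ, ← neg_add]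
    rw [hA.hright (R (P x)) y (R (P z)), neg_zero]
  · intro x y z
    simp only [hvS, hvE, hPα, hRα, hPβ, hRβ, ← neg_add]
    rw [hA.hright (R (P x)) (P y) (R z), neg_zero]
end
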